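/- Let f : ℤ_p → ℤ_p be a surjective 1-Lipschitz map such that for every n, the induced map f_{/n} on ℤ/p^nℤ has a full cycle. Then the dynamical system (ℤ_p, f) is topologically conjugate to the odometer T(x) = x + 1 on ℤ_p: there exists a homeomorphism Ψ : ℤ_p → ℤ_p with Ψ ∘ f = T ∘ Ψ. -/

import Mathlib

/-!
The 1-Lipschitz map `f` induces maps `g n` on `ℤ/p^n` compatible with reduction. Since `g n` is a
full cycle, `k ↦ (g n)^[k] 0` is a bijection of `ℤ/p^n` carrying `k ↦ k + 1` to `g n`, and these
bijections are again compatible with reduction. Their inverse limit is a homeomorphism `Φ` of `ℤ_p`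
(the continuous extension of `k ↦ f^[k] 0`) with `Φ (y + 1) = f (Φ y)`, and `Ψ = Φ⁻¹`.
-/

open Function

section Cycle

variable {α : Type*} {g : α → α} {a : α} {N : ℕ}

theorem Function.minimalPeriod_eq_card_of_forall_range_iterate [Fintype α]
    (h : ∀ b, Set.range (g^[·] b) = Set.univ) (a : α) :
    minimalPeriod g a = Fintype.card α := by
  refine minimalPeriod_le_card.antisymm ?_
  -- `a` lies on the orbit of `g a`, hence is periodic
  obtain ⟨k, hk⟩ : a ∈ Set.range (g^[·] (g a)) := h (g a) ▸ trivial
  have hpos : 0 < minimalPeriod g a :=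
    IsPeriodicPt.minimalPeriod_pos k.succ_pos <| by
      rwa [IsPeriodicPt, IsFixedPt, iterate_succ_apply]
  have hsurj : Surjective fun k : Fin (minimalPeriod g a) => g^[k] a := by
    intro b
    obtain ⟨j, rfl⟩ : b ∈ Set.range (g^[·] a) := h a ▸ trivial
    exact ⟨⟨j % minimalPeriod g a, Nat.mod_lt j hpos⟩, iterate_mod_minimalPeriod_eq⟩
  simpa using Fintype.card_le_of_surjective _ hsurj

theorem Function.iterate_val_natCast (h : minimalPeriod g a = N) (k : ℕ) :
    g^[(k : ZMod N).val] a = g^[k] a := by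
  rw [ZMod.val_natCast, ← h, iterate_mod_minimalPeriod_eq]

theorem Function.iterate_val_add_one [NeZero N] (h : minimalPeriod g a = N) (k : ZMod N) :
    g^[(k + 1).val] a = g (g^[k.val] a) := by
  rw [← ZMod.natCast_zmod_val k, ← Nat.cast_succ, iterate_val_natCast h,
    ZMod.val_natCast_of_lt k.val_lt, iterate_succ_apply']

theorem Function.injective_iterate_val [NeZero N] (h : minimalPeriod g a = N) :
    Injective fun k : ZMod N => g^[k.val] a := fun j k hjk =>
  ZMod.val_injective N <|
    (iterate_eq_iterate_iff_of_lt_minimalPeriod (h ▸ j.val_lt) (h ▸ k.val_lt)).mp hjk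

theorem Function.Semiconj.iterate_val_cast {β : Type*} {φ : β → α} {g' : β → β}
    (hφ : Semiconj φ g' g) {b : β} (hb : φ b = a) (h : minimalPeriod g a = N) {M : ℕ}
    [NeZero M] (k : ZMod M) : φ (g'^[k.val] b) = g^[(k.cast : ZMod N).val] a := by
  rw [ZMod.cast_eq_val, iterate_val_natCast h, (hφ.iterate_right k.val).eq, hb]

end Cycle

namespace PadicInt

variable {p : ℕ} [Fact p.Prime]

theorem toZModPow_surjective (n : ℕ) : Surjective (toZModPow (p := p) n) := fun a =>
  ⟨a.val, by rw [map_natCast, ZMod.natCast_zmod_val]⟩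

theorem toZModPow_eq_iff_norm_sub_le (n : ℕ) (x y : ℤ_[p]) :
    toZModPow n x = toZModPow n y ↔ ‖x - y‖ ≤ (p : ℝ) ^ (-n : ℤ) := by
  rw [norm_le_pow_iff_mem_span_pow, ← ker_toZModPow, RingHom.mem_ker, map_sub, sub_eq_zero]

theorem norm_sub_le_iff_forall_toZModPow {F : ℤ_[p] → ℤ_[p]} :
    (∀ x y, ‖F y - F x‖ ≤ ‖y - x‖) ↔
      ∀ n x y, toZModPow n x = toZModPow n y → toZModPow n (F x) = toZModPow n (F y) := by
  simp only [toZModPow_eq_iff_norm_sub_le]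
  refine ⟨fun hF n x y hxy => ?_, fun hF x y => ?_⟩
  · rw [norm_sub_rev] at hxy ⊢
    exact (hF x y).trans hxy
  · rcases eq_or_ne y x with rfl | hne
    · simp
    have hnorm := norm_eq_zpow_neg_valuation (sub_ne_zero.mpr hne)
    rw [hnorm]
    exact hF _ y x hnorm.le

theorem continuous_of_semiconj_toZModPow {Φ : ℤ_[p] → ℤ_[p]}
    {G : ∀ n, ZMod (p ^ n) → ZMod (p ^ n)} (hΦ : ∀ n, Semiconj (toZModPow n) Φ (G n)) :
    Continuous Φ :=
  have hcongr n x y (hxy : toZModPow n x = toZModPow n y) :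
      toZModPow n (Φ x) = toZModPow n (Φ y) := by
    rw [hΦ n x, hΦ n y, hxy]
  LipschitzWith.continuous (K := 1) <| LipschitzWith.of_dist_le_mul fun x y => by
    simpa [dist_eq_norm] using norm_sub_le_iff_forall_toZModPow.mpr hcongr y x

theorem exists_toZModPow_eq (a : ∀ n, ZMod (p ^ n)) (ha : ∀ n, (a (n + 1)).cast = a n) :
    ∃ x : ℤ_[p], ∀ n, toZModPow n x = a n := by
  have hdvd : ∀ n, (p : ℤ) ^ n ∣ ((a (n + 1)).val : ℤ) - (a n).val := fun n => by
    rw [← Nat.cast_pow, ← ZMod.intCast_eq_intCast_iff_dvd_sub, Int.cast_natCast, Int.cast_natCast,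
      ZMod.natCast_zmod_val, ← ha n, ZMod.cast_eq_val]
  refine ⟨_, fun n =>
    (toZModPow_ofIntSeq_of_pow_dvd_sub (fun i => ((a i).val : ℤ)) p hdvd n).trans ?_⟩
  rw [Int.cast_natCast, ZMod.natCast_zmod_val]

theorem exists_semiconj_toZModPow_of_congr {F : ℤ_[p] → ℤ_[p]}
    (hF : ∀ n x y, toZModPow n x = toZModPow n y → toZModPow n (F x) = toZModPow n (F y)) :
    ∃ G : ∀ n, ZMod (p ^ n) → ZMod (p ^ n), ∀ n, Semiconj (toZModPow n) F (G n) :=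
  ⟨fun n => extend (toZModPow n) (toZModPow n ∘ F) 0, fun n x =>
    (FactorsThrough.extend_apply (hF n) 0 x).symm⟩

theorem semiconj_cast_of_semiconj_toZModPow {F : ℤ_[p] → ℤ_[p]}
    {G : ∀ n, ZMod (p ^ n) → ZMod (p ^ n)} (hG : ∀ n, Semiconj (toZModPow n) F (G n)) (n : ℕ) :
    Semiconj (ZMod.cast : ZMod (p ^ (n + 1)) → ZMod (p ^ n)) (G (n + 1)) (G n) := by
  intro a
  obtain ⟨x, rfl⟩ := toZModPow_surjective (n + 1) a
  rw [← hG, cast_toZModPow _ _ n.le_succ, cast_toZModPow _ _ n.le_succ, hG]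

theorem exists_semiconj_toZModPow_of_compatible (G : ∀ n, ZMod (p ^ n) → ZMod (p ^ n))
    (hG : ∀ n, Semiconj (ZMod.cast : ZMod (p ^ (n + 1)) → ZMod (p ^ n)) (G (n + 1)) (G n)) :
    ∃ Φ : ℤ_[p] → ℤ_[p], ∀ n, Semiconj (toZModPow n) Φ (G n) := by
  choose Φ hΦ using fun x : ℤ_[p] => exists_toZModPow_eq (fun n => G n (toZModPow n x))
    fun n => by rw [hG n, cast_toZModPow _ _ n.le_succ]
  exact ⟨Φ, fun n x => hΦ x n⟩

theorem exists_homeomorph_semiconj_toZModPow (G : ∀ n, Equiv.Perm (ZMod (p ^ n)))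
    (hG : ∀ n, Semiconj (ZMod.cast : ZMod (p ^ (n + 1)) → ZMod (p ^ n)) (G (n + 1)) (G n)) :
    ∃ Φ : ℤ_[p] ≃ₜ ℤ_[p], ∀ n, Semiconj (toZModPow n) Φ (G n) := by
  obtain ⟨Φ, hΦ⟩ := exists_semiconj_toZModPow_of_compatible (fun n => G n) hG
  obtain ⟨Ψ, hΨ⟩ := exists_semiconj_toZModPow_of_compatible (fun n => (G n).symm)
    fun n => (hG n).inverses_right (G (n + 1)).right_inv (G n).left_inv
  exact ⟨{ toFun := Φ, invFun := Ψ
           left_inv := fun x => ext_of_toZModPow.mp fun n => by simp [hΦ n x, hΨ n (Φ x)]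
           right_inv := fun x => ext_of_toZModPow.mp fun n => by simp [hΦ n (Ψ x), hΨ n x]
           continuous_toFun := continuous_of_semiconj_toZModPow hΦ
           continuous_invFun := continuous_of_semiconj_toZModPow hΨ }, hΦ⟩

end PadicInt

open PadicInt

theorem stmt9_general (p : ℕ) [Fact p.Prime] (f : ℤ_[p] → ℤ_[p])
    (hlip : ∀ x y : ℤ_[p], ‖f y - f x‖ ≤ ‖y - x‖)
    (hcycle : ∀ (n : ℕ) (g : ZMod (p ^ n) → ZMod (p ^ n)),
      (∀ x : ℤ_[p], g (PadicInt.toZModPow n x) = PadicInt.toZModPow n (f x)) →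
        ∀ a : ZMod (p ^ n), Set.range (fun k : ℕ => g^[k] a) = Set.univ) :
    ∃ Ψ : ℤ_[p] ≃ₜ ℤ_[p], ∀ x : ℤ_[p], Ψ (f x) = Ψ x + 1 := by
  obtain ⟨g, hg⟩ := exists_semiconj_toZModPow_of_congr (norm_sub_le_iff_forall_toZModPow.mp hlip)
  have hperiod n : minimalPeriod (g n) 0 = p ^ n := by
    rw [minimalPeriod_eq_card_of_forall_range_iterate (hcycle n (g n) fun x => (hg n x).symm),
      ZMod.card]
  let orbit n : Equiv.Perm (ZMod (p ^ n)) :=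
    Equiv.ofBijective _ (Finite.injective_iff_bijective.mp (injective_iterate_val (hperiod n)))
  obtain ⟨Φ, hΦ⟩ := exists_homeomorph_semiconj_toZModPow orbit fun n k =>
    (semiconj_cast_of_semiconj_toZModPow hg n).iterate_val_cast ZMod.cast_zero (hperiod n) k
  have hΦ_succ y : Φ (y + 1) = f (Φ y) := ext_of_toZModPow.mp fun n => by
    rw [hΦ n, map_add, map_one, hg n, hΦ n]
    exact iterate_val_add_one (hperiod n) _
  refine ⟨Φ.symm, fun x => ?_⟩
  obtain ⟨y, rfl⟩ := Φ.surjective x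
  rw [← hΦ_succ, Φ.symm_apply_apply, Φ.symm_apply_apply]

theorem stmt9 (p : ℕ) [Fact p.Prime] (f : ℤ_[p] → ℤ_[p])
    (hlip : ∀ x y : ℤ_[p], ‖f y - f x‖ ≤ ‖y - x‖)
    (hsurj : Function.Surjective f)
    (hcycle : ∀ (n : ℕ) (g : ZMod (p ^ n) → ZMod (p ^ n)),
      (∀ x : ℤ_[p], g (PadicInt.toZModPow n x) = PadicInt.toZModPow n (f x)) →
        ∀ a : ZMod (p ^ n), Set.range (fun k : ℕ => g^[k] a) = Set.univ) :
    ∃ Ψ : ℤ_[p] ≃ₜ ℤ_[p], ∀ x : ℤ_[p], Ψ (f x) = Ψ x + 1 :=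
  stmt9_general p f hlip hcycle
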